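/- Let swap(ℱ, A, R) = {(F \ {v'}) ∪ {v} : F ∈ ℱ, v ∈ A \ F, v' ∈ F ∩ R, v ≠ v'}. For x ∈ A ∩ R: decomp₀(swap(ℱ, A, R), x) = swap(decomp₀(ℱ, x), A\{x}, R\{x}) ∪ add(decomp₁(ℱ, x), A\{x}), and decomp₁(swap(ℱ, A, R), x) = swap(decomp₁(ℱ, x), A\{x}, R\{x}) ∪ remove(decomp₀(ℱ, x), R\{x}). -/
import Mathlib


def decomp0 {α : Type*} (ℱ : Set (Finset α)) (x : α) : Set (Finset α) :=
  {F ∈ ℱ | x ∉ F}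

def decomp1 {α : Type*} [DecidableEq α] (ℱ : Set (Finset α)) (x : α) : Set (Finset α) :=
  {G | ∃ F ∈ ℱ, x ∈ F ∧ G = F.erase x}

def removeFam {α : Type*} [DecidableEq α] (ℱ : Set (Finset α)) (R : Finset α) :
    Set (Finset α) :=
  {G | ∃ F ∈ ℱ, ∃ v ∈ F ∩ R, G = F.erase v}

def addFam {α : Type*} [DecidableEq α] (ℱ : Set (Finset α)) (A : Finset α) :
    Set (Finset α) :=
  {G | ∃ F ∈ ℱ, ∃ v ∈ A \ F, G = insert v F}

def swapFam {α : Type*} [DecidableEq α] (ℱ : Set (Finset α)) (A R : Finset α) :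
    Set (Finset α) :=
  {G | ∃ F ∈ ℱ, ∃ v ∈ A \ F, ∃ v' ∈ F ∩ R, v ≠ v' ∧ G = insert v (F.erase v')}

theorem decomp_swap_mem {α : Type*} [DecidableEq α]
    (ℱ : Set (Finset α)) (A R : Finset α) (x : α) (hxA : x ∈ A) (hxR : x ∈ R) :
    decomp0 (swapFam ℱ A R) x
      = swapFam (decomp0 ℱ x) (A.erase x) (R.erase x)
        ∪ addFam (decomp1 ℱ x) (A.erase x) ∧
    decomp1 (swapFam ℱ A R) x
      = swapFam (decomp1 ℱ x) (A.erase x) (R.erase x)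
        ∪ removeFam (decomp0 ℱ x) (R.erase x) := by
  have key : ∀ s : Finset α, ∀ a b : α, a ≠ b → ((insert a s).erase b) = insert a (s.erase b) :=
    fun s a b h => Finset.erase_insert_of_ne h
  constructor
  · ext G
    simp only [decomp0, decomp1, swapFam, addFam, Set.mem_setOf_eq, Set.mem_union]
    constructor
    · rintro ⟨⟨F, hF, v, hv, v', hv', hne, rfl⟩, hx⟩
      obtain ⟨hvA, hvF⟩ := Finset.mem_sdiff.mp hv
      obtain ⟨hv'F, hv'R⟩ := Finset.mem_inter.mp hv'
      have hxv : x ≠ v := fun h => hx (Finset.mem_insert.mpr (Or.inl h))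
      by_cases hxF : x ∈ F
      · have hv'x : v' = x := by
          by_contra h
          exact hx (Finset.mem_insert_of_mem (Finset.mem_erase.mpr ⟨fun hh => h hh.symm, hxF⟩))
        right
        exact ⟨F.erase x, ⟨F, hF, hv'x ▸ hv'F, rfl⟩, v,
          Finset.mem_sdiff.mpr ⟨Finset.mem_erase.mpr ⟨fun h => hxv h.symm, hvA⟩,
            fun h => hvF (Finset.mem_of_mem_erase h)⟩, by rw [hv'x]⟩
      · left
        refine ⟨F, ⟨hF, hxF⟩, v,
          Finset.mem_sdiff.mpr ⟨Finset.mem_erase.mpr ⟨fun h => hxv h.symm, hvA⟩, hvF⟩, v',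
          Finset.mem_inter.mpr ⟨hv'F, Finset.mem_erase.mpr ⟨fun h => hxF (h ▸ hv'F), hv'R⟩⟩,
          hne, rfl⟩
    · rintro (⟨F, ⟨hF, hxF⟩, v, hv, v', hv', hne, rfl⟩ | ⟨H, ⟨F, hF, hxF, rfl⟩, v, hv, rfl⟩)
      · obtain ⟨hvAe, hvF⟩ := Finset.mem_sdiff.mp hv
        obtain ⟨hvx, hvA⟩ := Finset.mem_erase.mp hvAe
        obtain ⟨hv'F, hv'Re⟩ := Finset.mem_inter.mp hv'
        obtain ⟨hv'x, hv'R⟩ := Finset.mem_erase.mp hv'Re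
        refine ⟨⟨F, hF, v, Finset.mem_sdiff.mpr ⟨hvA, hvF⟩, v',
          Finset.mem_inter.mpr ⟨hv'F, hv'R⟩, hne, rfl⟩, ?_⟩
        intro h
        rcases Finset.mem_insert.mp h with h | h
        · exact hvx h.symm
        · exact hxF (Finset.mem_of_mem_erase h)
      · obtain ⟨hvAe, hvFe⟩ := Finset.mem_sdiff.mp hv
        obtain ⟨hvx, hvA⟩ := Finset.mem_erase.mp hvAe
        have hvF : v ∉ F := fun h => hvFe (Finset.mem_erase.mpr ⟨hvx, h⟩)
        refine ⟨⟨F, hF, v, Finset.mem_sdiff.mpr ⟨hvA, hvF⟩, x,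
          Finset.mem_inter.mpr ⟨hxF, hxR⟩, hvx, rfl⟩, ?_⟩
        intro h
        rcases Finset.mem_insert.mp h with h | h
        · exact hvx h.symm
        · exact (Finset.mem_erase.mp h).1 rfl
  · ext G
    simp only [decomp0, decomp1, swapFam, removeFam, Set.mem_setOf_eq, Set.mem_union]
    constructor
    · rintro ⟨G', ⟨F, hF, v, hv, v', hv', hne, rfl⟩, hx, rfl⟩
      obtain ⟨hvA, hvF⟩ := Finset.mem_sdiff.mp hv
      obtain ⟨hv'F, hv'R⟩ := Finset.mem_inter.mp hv'
      by_cases hvx : v = x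
      · subst hvx
        right
        have hxF : v ∉ F := hvF
        refine ⟨F, ⟨hF, hxF⟩, v', Finset.mem_inter.mpr ⟨hv'F,
          Finset.mem_erase.mpr ⟨fun h => hxF (h ▸ hv'F), hv'R⟩⟩, ?_⟩
        rw [Finset.erase_insert (fun h => hxF (Finset.mem_of_mem_erase h))]
      · left
        have hxF : x ∈ F := by
          rcases Finset.mem_insert.mp hx with h | h
          · exact absurd h.symm hvx
          · exact Finset.mem_of_mem_erase h
        have hv'x : v' ≠ x := by
          rcases Finset.mem_insert.mp hx with h | h
          · exact absurd h.symm hvx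
          · exact fun he => (Finset.mem_erase.mp h).1 he.symm
        refine ⟨F.erase x, ⟨F, hF, hxF, rfl⟩, v,
          Finset.mem_sdiff.mpr ⟨Finset.mem_erase.mpr ⟨hvx, hvA⟩,
            fun h => hvF (Finset.mem_of_mem_erase h)⟩, v',
          Finset.mem_inter.mpr ⟨Finset.mem_erase.mpr ⟨hv'x, hv'F⟩,
            Finset.mem_erase.mpr ⟨hv'x, hv'R⟩⟩, hne, ?_⟩
        rw [key _ _ _ hvx, Finset.erase_right_comm]
    · rintro (⟨H, ⟨F, hF, hxF, rfl⟩, v, hv, v', hv', hne, rfl⟩ | ⟨F, ⟨hF, hxF⟩, v', hv', rfl⟩)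
      · obtain ⟨hvAe, hvFe⟩ := Finset.mem_sdiff.mp hv
        obtain ⟨hvx, hvA⟩ := Finset.mem_erase.mp hvAe
        have hvF : v ∉ F := fun h => hvFe (Finset.mem_erase.mpr ⟨hvx, h⟩)
        obtain ⟨hv'Fe, hv'Re⟩ := Finset.mem_inter.mp hv'
        obtain ⟨hv'x, hv'F⟩ := Finset.mem_erase.mp hv'Fe
        obtain ⟨_, hv'R⟩ := Finset.mem_erase.mp hv'Re
        refine ⟨insert v (F.erase v'), ⟨F, hF, v, Finset.mem_sdiff.mpr ⟨hvA, hvF⟩, v',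
          Finset.mem_inter.mpr ⟨hv'F, hv'R⟩, hne, rfl⟩, ?_, ?_⟩
        · exact Finset.mem_insert_of_mem (Finset.mem_erase.mpr ⟨Ne.symm hv'x, hxF⟩)
        · rw [key _ _ _ hvx, Finset.erase_right_comm]
      · obtain ⟨hv'F, hv'Re⟩ := Finset.mem_inter.mp hv'
        obtain ⟨hv'x, hv'R⟩ := Finset.mem_erase.mp hv'Re
        refine ⟨insert x (F.erase v'), ⟨F, hF, x, Finset.mem_sdiff.mpr ⟨hxA, hxF⟩, v',
          Finset.mem_inter.mpr ⟨hv'F, hv'R⟩, Ne.symm hv'x, rfl⟩,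
          Finset.mem_insert_self _ _, ?_⟩
        rw [Finset.erase_insert (fun h => hxF (Finset.mem_of_mem_erase h))]
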